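/- Explicit composition failure for doctor-proposing Gale–Shapley: let D = {i1, i2, j} with clusters {i1, i2} and {j}, and H = {A, B, C}. Doctor preferences: A ≻_{i1} B ≻_{i1} C; A ≻_{i2} C ≻_{i2} B; C ≻_j A ≻_j B. Consider all preference profiles in which hospital A's strict order on D is j ≻ i1 ≻ i2 or j ≻ i2 ≻ i1, hospital B's order is i1 ≻ i2 ≻ j or i2 ≻ i1 ≻ j, and hospital C's order is i1 ≻ i2 ≻ j or i2 ≻ i1 ≻ j. Then: (1) for every such profile in which A ranks i1 above i2, the matching m1 = {i1 ↦ B, i2 ↦ C, j ↦ A} is the doctor-optimal stable matching; (2) for every such profile in which A ranks i2 above i1, the matching m2 = {i1 ↦ B, i2 ↦ A, j ↦ C} is the doctor-optimal stable matching; and (3) the allocation π = (1/2)·δ_{m1} + (1/2)·δ_{m2} is not PIIF with respect to the proto-metric: the prospect of i1 does not stochastically dominate the prospect of i2 with respect to ≻_{i1} (i1 is matched to its top choice A with probability 0 while i2 is matched to A with probability 1/2). -/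

import Mathlib

open Finset

/-- A probabilistic allocation: a finitely supported probability distribution over
matchings (bijections between doctors `D` and hospitals `H`). -/
def IsAlloc {D H : Type*} [Fintype D] [Fintype H] [DecidableEq D] [DecidableEq H]
    (π : (D ≃ H) → ℝ) : Prop :=
  (∀ m, 0 ≤ π m) ∧ (∑ m : D ≃ H, π m) = 1

/-- The prospect of doctor `i` under the allocation `π`: the probability that `i`
is matched to hospital `h`. -/
def prospect {D H : Type*} [Fintype D] [Fintype H] [DecidableEq D] [DecidableEq H]
    (π : (D ≃ H) → ℝ) (i : D) (h : H) : ℝ :=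
  ∑ m : D ≃ H, if m i = h then π m else 0

/-- `p` is a probability distribution on `H`. -/
def IsDist {H : Type*} [Fintype H] (p : H → ℝ) : Prop :=
  (∀ h, 0 ≤ p h) ∧ (∑ h : H, p h) = 1

/-- Total variation distance between two distributions on `H`. -/
noncomputable def TV {H : Type*} [Fintype H] (p q : H → ℝ) : ℝ :=
  (1 / 2) * ∑ h : H, |p h - q h|

/-- `p` stochastically dominates `q` with respect to the strict preference relation
`pref` (where `pref x y` means `x` is strictly preferred to `y`): for every `h`, the
probability of an outcome at least as good as `h` under `p` is at least that under `q`. -/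
def SDom {H : Type*} [Fintype H] (pref : H → H → Prop) (p q : H → ℝ) : Prop :=
  ∀ h : H,
    (∑ h' : H, Set.indicator {x : H | pref x h ∨ x = h} q h') ≤
      ∑ h' : H, Set.indicator {x : H | pref x h ∨ x = h} p h'

/-- Preference-informed individual fairness with respect to a (pseudo)metric `d`,
total variation distance, and the doctors' strict preferences `pref`. -/
def PIIF {D H : Type*} [Fintype D] [Fintype H] [DecidableEq D] [DecidableEq H]
    (d : D → D → ℝ) (pref : D → H → H → Prop) (π : (D ≃ H) → ℝ) : Prop :=
  ∀ i j : D, ∃ p : H → ℝ,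
    IsDist p ∧ TV p (prospect π j) ≤ d i j ∧ SDom (pref i) (prospect π i) p

/-- PIIF with respect to the proto-metric induced by the cluster map `c`: the prospect
of every doctor stochastically dominates the prospect of every doctor in its cluster. -/
def ClusterPIIF {D H K : Type*} [Fintype D] [Fintype H] [DecidableEq D] [DecidableEq H]
    (c : D → K) (pref : D → H → H → Prop) (π : (D ≃ H) → ℝ) : Prop :=
  ∀ i j : D, c i = c j → SDom (pref i) (prospect π i) (prospect π j)

namespace Stmt4

/-! Doctors: `i1 = 0`, `i2 = 1`, `j = 2`.  Hospitals: `A = 0`, `B = 1`, `C = 2`.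
Clusters: `{i1, i2}` (cluster `0`) and `{j}` (cluster `1`). -/

/-- The cluster map: `i1` and `i2` are in one cluster, `j` in another. -/
def c : Fin 3 → Fin 2 := ![0, 0, 1]

/-- Rank functions of the doctors over the hospitals (rank `0` is best):
`A ≻_{i1} B ≻_{i1} C`, `A ≻_{i2} C ≻_{i2} B`, `C ≻_j A ≻_j B`. -/
def drk : Fin 3 → Fin 3 → ℕ := ![![0, 1, 2], ![0, 2, 1], ![1, 2, 0]]

/-- Doctor `i` strictly prefers hospital `h1` to hospital `h2`. -/
def dpref (i : Fin 3) (h1 h2 : Fin 3) : Prop := drk i h1 < drk i h2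

/-- A matching `m` is stable for the hospital rank functions `R` (rank `0` is best):
no doctor–hospital pair prefer each other to their partners. -/
def StableFor (R : Fin 3 → Fin 3 → ℕ) (m : Fin 3 ≃ Fin 3) : Prop :=
  ¬ ∃ (i : Fin 3) (h : Fin 3), dpref i h (m i) ∧ R h i < R h (m.symm h)

/-- `m` is the doctor-optimal stable matching for the hospital ranks `R`. -/
def DoctorOptimalStable (R : Fin 3 → Fin 3 → ℕ) (m : Fin 3 ≃ Fin 3) : Prop :=
  StableFor R m ∧
    ∀ m' : Fin 3 ≃ Fin 3, StableFor R m' → ∀ i : Fin 3, m i = m' i ∨ dpref i (m i) (m' i)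

/-- The matching `i1 ↦ B, i2 ↦ C, j ↦ A`. -/
def m1 : Fin 3 ≃ Fin 3 := ⟨![1, 2, 0], ![2, 0, 1], by decide, by decide⟩

/-- The matching `i1 ↦ B, i2 ↦ A, j ↦ C`. -/
def m2 : Fin 3 ≃ Fin 3 := ⟨![1, 0, 2], ![1, 0, 2], by decide, by decide⟩

/-- The allocation `π = (1/2)·δ_{m1} + (1/2)·δ_{m2}`. -/
noncomputable def π : (Fin 3 ≃ Fin 3) → ℝ := fun m =>
  (1 / 2) * (if m = m1 then 1 else 0) + (1 / 2) * (if m = m2 then 1 else 0)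

end Stmt4

/-!
Both matchings can be found by running doctor-proposing deferred acceptance, but on three
doctors and three hospitals stability and doctor-optimality are simply checked against all six
matchings, in each of the eight profiles. In both `m1` and `m2` doctor `i1` is sent to `B`, so
`i1` never gets its top choice `A` while `i2` gets `A` with probability `1/2`; at a top choice
stochastic dominance is just the inequality of the point probabilities, which therefore fails.
-/

section Prospect

variable {D H : Type*} [Fintype D] [Fintype H] [DecidableEq D] [DecidableEq H]

theorem prospect_add (π₁ π₂ : (D ≃ H) → ℝ) (i : D) (h : H) :
    prospect (fun m => π₁ m + π₂ m) i h = prospect π₁ i h + prospect π₂ i h := by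
  simp only [prospect, ← sum_add_distrib, ite_add_zero]

theorem prospect_const_mul (a : ℝ) (π : (D ≃ H) → ℝ) (i : D) (h : H) :
    prospect (fun m => a * π m) i h = a * prospect π i h := by
  simp only [prospect, mul_sum, mul_ite, mul_zero]

theorem prospect_pointMass (m₀ : D ≃ H) (i : D) (h : H) :
    prospect (fun m => if m = m₀ then 1 else 0) i h = if m₀ i = h then 1 else 0 := by
  rw [prospect, Fintype.sum_eq_single m₀ fun m hm => by simp [hm]]
  simp

end Prospect

theorem SDom.le_of_isTop {H : Type*} [Fintype H] {pref : H → H → Prop} {p q : H → ℝ}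
    (hpq : SDom pref p q) {h : H} (htop : ∀ x, ¬ pref x h) : q h ≤ p h := by
  have hset : {x : H | pref x h ∨ x = h} = {h} := by
    ext x; simp [htop]
  have hsum (f : H → ℝ) : ∑ x, Set.indicator {h} f x = f h :=
    (Fintype.sum_eq_single h fun x hx => by simp [hx]).trans (by simp)
  simpa [hset, hsum] using hpq h

theorem eta_fin_three_vec {α : Type*} (v : Fin 3 → α) : v = ![v 0, v 1, v 2] :=
  funext fun i => by fin_cases i <;> rfl

namespace Stmt4

instance (i : Fin 3) : DecidableRel (dpref i) := fun h₁ h₂ =>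
  inferInstanceAs (Decidable (drk i h₁ < drk i h₂))

instance (R : Fin 3 → Fin 3 → ℕ) : DecidablePred (StableFor R) := fun m =>
  inferInstanceAs (Decidable (¬ ∃ i h, dpref i h (m i) ∧ R h i < R h (m.symm h)))

instance (R : Fin 3 → Fin 3 → ℕ) : DecidablePred (DoctorOptimalStable R) := fun m =>
  inferInstanceAs (Decidable (StableFor R m ∧
    ∀ m' : Fin 3 ≃ Fin 3, StableFor R m' → ∀ i, m i = m' i ∨ dpref i (m i) (m' i)))

theorem doctorOptimalStable_m1 {R : Fin 3 → Fin 3 → ℕ} (hA : R 0 = ![1, 2, 0])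
    (hB : R 1 = ![0, 1, 2] ∨ R 1 = ![1, 0, 2]) (hC : R 2 = ![0, 1, 2] ∨ R 2 = ![1, 0, 2]) :
    DoctorOptimalStable R m1 := by
  rw [eta_fin_three_vec R, hA]
  rcases hB with hB | hB <;> rcases hC with hC | hC <;> rw [hB, hC] <;> decide

theorem doctorOptimalStable_m2 {R : Fin 3 → Fin 3 → ℕ} (hA : R 0 = ![2, 1, 0])
    (hB : R 1 = ![0, 1, 2] ∨ R 1 = ![1, 0, 2]) (hC : R 2 = ![0, 1, 2] ∨ R 2 = ![1, 0, 2]) :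
    DoctorOptimalStable R m2 := by
  rw [eta_fin_three_vec R, hA]
  rcases hB with hB | hB <;> rcases hC with hC | hC <;> rw [hB, hC] <;> decide

theorem prospect_π (i h : Fin 3) :
    prospect π i h = 1 / 2 * (if m1 i = h then 1 else 0) + 1 / 2 * (if m2 i = h then 1 else 0) := by
  unfold π
  rw [prospect_add, prospect_const_mul, prospect_const_mul, prospect_pointMass,
    prospect_pointMass]

theorem prospect_π_zero_zero : prospect π 0 0 = 0 := by
  simp [prospect_π, m1, m2]

theorem prospect_π_one_zero : prospect π 1 0 = 1 / 2 := by
  simp [prospect_π, m1, m2]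

theorem not_sDom_prospect_π : ¬ SDom (dpref 0) (prospect π 0) (prospect π 1) := fun hS => by
  have := hS.le_of_isTop (h := 0) fun x => Nat.not_lt_zero (drk 0 x)
  rw [prospect_π_zero_zero, prospect_π_one_zero] at this
  norm_num at this

theorem doctor_propose_explicit_failure :
    (∀ R : Fin 3 → Fin 3 → ℕ,
      (R 0 = ![1, 2, 0] ∨ R 0 = ![2, 1, 0]) →
      (R 1 = ![0, 1, 2] ∨ R 1 = ![1, 0, 2]) →
      (R 2 = ![0, 1, 2] ∨ R 2 = ![1, 0, 2]) →
      ((R 0 0 < R 0 1 → DoctorOptimalStable R m1) ∧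
       (R 0 1 < R 0 0 → DoctorOptimalStable R m2))) ∧
    prospect π 0 0 = 0 ∧
    prospect π 1 0 = 1 / 2 ∧
    ¬ SDom (dpref 0) (prospect π 0) (prospect π 1) ∧
    ¬ ClusterPIIF c dpref π := by
  refine ⟨fun R hA hB hC => ⟨fun hlt => ?_, fun hlt => ?_⟩, prospect_π_zero_zero,
    prospect_π_one_zero, not_sDom_prospect_π, fun hPIIF => not_sDom_prospect_π (hPIIF 0 1 rfl)⟩
  · rcases hA with hA | hA
    · exact doctorOptimalStable_m1 hA hB hC
    · simp [hA] at hlt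
  · rcases hA with hA | hA
    · simp [hA] at hlt
    · exact doctorOptimalStable_m2 hA hB hC

end Stmt4
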